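/- For every λ > 0, the function Φ^{1,λ}(t,y) := (1/(2√2·y)) · exp(λ²/2) · ∫_{(y−λ)²/(2(1−t))}^{(y+λ)²/(2(1−t))} e^{−u} u^{−1/2} du, defined for t ∈ (0,1) and y > 0, satisfies the partial differential equation (1/2)·∂²_{yy}Φ^{1,λ}(t,y) + (1/y)·∂_y Φ^{1,λ}(t,y) + ∂_t Φ^{1,λ}(t,y) = 0 for all t ∈ (0,1) and y > 0 with y ≠ λ. -/

import Mathlib

open Real

/-- `Φ^{1,λ}(t,y)`. -/
noncomputable def Phi1 (lam t y : ℝ) : ℝ :=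
  1 / (2 * Real.sqrt 2 * y) * Real.exp (lam ^ 2 / 2) *
    ∫ u in (y - lam) ^ 2 / (2 * (1 - t))..(y + lam) ^ 2 / (2 * (1 - t)),
      Real.exp (-u) / Real.sqrt u

/-!
Write `s = √(2(1-t))` and `E(x) = ∫₀ˣ e^{-v²} dv`. The substitution `u = v²` turns
`Φ^{1,λ}(t,y)` into `e^{λ²/2} / (√2 y) · (E((y+λ)/s) - E(|y-λ|/s))`; since `E` is odd, near a
point with `y ≠ λ` this is `u(t,y) / y` for a fixed linear combination `u` of the Gaussian fronts
`E((y ± λ)/s)`. Each front solves the backward heat equation `½ ∂²_y u + ∂_t u = 0`, and dividing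
by `y` (Doob's `h`-transform with the harmonic function `h(y) = y`) turns solutions of the backward
heat equation into solutions of the backward equation `½ ∂²_y + (1/y) ∂_y + ∂_t` of the three
dimensional Bessel process.
-/

open Filter Topology intervalIntegral

def SolvesBackwardHeatAt (u : ℝ → ℝ → ℝ) (t y : ℝ) : Prop :=
  ∃ (u_y : ℝ → ℝ) (u_yy u_t : ℝ), (∀ᶠ w in 𝓝 y, HasDerivAt (u t) (u_y w) w) ∧
    HasDerivAt u_y u_yy y ∧ HasDerivAt (fun s => u s y) u_t t ∧ u_yy / 2 + u_t = 0

namespace SolvesBackwardHeatAt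

variable {u v : ℝ → ℝ → ℝ} {t y : ℝ}

theorem sub (hu : SolvesBackwardHeatAt u t y) (hv : SolvesBackwardHeatAt v t y) :
    SolvesBackwardHeatAt (fun s w => u s w - v s w) t y := by
  obtain ⟨u_y, u_yy, u_t, hu_y, hu_yy, hu_t, hu⟩ := hu
  obtain ⟨v_y, v_yy, v_t, hv_y, hv_yy, hv_t, hv⟩ := hv
  refine ⟨fun w => u_y w - v_y w, u_yy - v_yy, u_t - v_t, ?_, hu_yy.sub hv_yy, hu_t.sub hv_t, ?_⟩
  · filter_upwards [hu_y, hv_y] with w hu hv using hu.sub hv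
  · linear_combination hu - hv

theorem const_mul (c : ℝ) (hu : SolvesBackwardHeatAt u t y) :
    SolvesBackwardHeatAt (fun s w => c * u s w) t y := by
  obtain ⟨u_y, u_yy, u_t, hu_y, hu_yy, hu_t, hu⟩ := hu
  refine ⟨fun w => c * u_y w, c * u_yy, c * u_t, ?_, hu_yy.const_mul c, hu_t.const_mul c, ?_⟩
  · filter_upwards [hu_y] with w hu using hu.const_mul c
  · linear_combination c * hu

theorem besselGenerator_div_eq_zero (hu : SolvesBackwardHeatAt u t y) (hy : y ≠ 0)
    {f : ℝ → ℝ → ℝ} (hf_y : f t =ᶠ[𝓝 y] fun w => u t w / w)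
    (hf_t : (fun s => f s y) =ᶠ[𝓝 t] fun s => u s y / y) :
    (1 / 2) * deriv (fun z => deriv (fun w => f t w) z) y + (1 / y) * deriv (fun w => f t w) y +
      deriv (fun s => f s y) t = 0 := by
  obtain ⟨u_y, u_yy, u_t, hu_y, hu_yy, hu_t, hu⟩ := hu
  have hf_y' : ∀ᶠ w in 𝓝 y, HasDerivAt (f t) ((u_y w * w - u t w) / w ^ 2) w := by
    filter_upwards [hf_y.eventuallyEq_nhds, hu_y, eventually_ne_nhds hy] with w hfw huw hw
    simpa using (huw.div (hasDerivAt_id' w) hw).congr_of_eventuallyEq hfw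
  have hf_yy : HasDerivAt (fun w => (u_y w * w - u t w) / w ^ 2)
      ((u_yy * y * y ^ 2 - (u_y y * y - u t y) * (2 * y)) / (y ^ 2) ^ 2) y := by
    simpa using ((hu_yy.mul (hasDerivAt_id' y)).sub hu_y.self_of_nhds).fun_div
      ((hasDerivAt_id' y).fun_pow 2) (pow_ne_zero 2 hy)
  have hderiv : deriv (f t) =ᶠ[𝓝 y] fun w => (u_y w * w - u t w) / w ^ 2 :=
    hf_y'.mono fun w hw => hw.deriv
  rw [hderiv.deriv_eq, hf_yy.deriv, hf_y'.self_of_nhds.deriv,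
    hf_t.deriv_eq, (hu_t.div_const y).deriv]
  field_simp
  linear_combination (2 * y ^ 2) * hu

end SolvesBackwardHeatAt

noncomputable def gaussPrimitive (x : ℝ) : ℝ := ∫ v in 0..x, exp (-v ^ 2)

theorem hasDerivAt_gaussPrimitive (x : ℝ) : HasDerivAt gaussPrimitive (exp (-x ^ 2)) x :=
  (Continuous.integral_hasStrictDerivAt (by fun_prop) 0 x).hasDerivAt

theorem gaussPrimitive_neg (x : ℝ) : gaussPrimitive (-x) = -gaussPrimitive x := by
  have h := integral_comp_neg (a := 0) (b := x) fun v => exp (-v ^ 2)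
  simp only [neg_sq, neg_zero] at h
  rw [gaussPrimitive, gaussPrimitive, h, integral_symm]

noncomputable def heatProfile (c t y : ℝ) : ℝ :=
  gaussPrimitive ((y + c) / √(2 * (1 - t)))

theorem solvesBackwardHeatAt_heatProfile (c : ℝ) {t : ℝ} (ht : t < 1) (y : ℝ) :
    SolvesBackwardHeatAt (heatProfile c) t y := by
  set s := √(2 * (1 - t)) with hs_def
  have hs : 0 < s := sqrt_pos.2 (by linarith)
  have hz : ∀ w, HasDerivAt (fun w => (w + c) / s) (1 / s) w := fun w =>
    ((hasDerivAt_id' w).add_const c).div_const s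
  have hs_t : HasDerivAt (fun τ => √(2 * (1 - τ))) (-1 / s) t := by
    convert (((hasDerivAt_id' t).const_sub 1).const_mul 2).sqrt (by linarith) using 1
    rw [← hs_def]
    field_simp
  refine ⟨fun w => exp (-((w + c) / s) ^ 2) / s, -2 * (y + c) * exp (-((y + c) / s) ^ 2) / s ^ 3,
    (y + c) * exp (-((y + c) / s) ^ 2) / s ^ 3, Eventually.of_forall fun w => ?_, ?_, ?_, by ring⟩
  · exact ((hasDerivAt_gaussPrimitive _).comp w (hz w)).congr_deriv (by ring)
  · exact (((hz y).fun_pow 2).fun_neg.exp.div_const s).congr_deriv (by norm_num; field_simp)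
  · exact ((hasDerivAt_gaussPrimitive _).comp t
      ((hasDerivAt_const t (y + c)).fun_div hs_t hs.ne')).congr_deriv
      (by rw [← hs_def]; field_simp; ring)

theorem integral_exp_neg_div_sqrt_sq {p q : ℝ} (hp : 0 < p) (hq : 0 < q) :
    ∫ u in p ^ 2..q ^ 2, exp (-u) / √u = 2 * (gaussPrimitive q - gaussPrimitive p) := by
  have hpos : ∀ v ∈ Set.uIcc p q, 0 < v := fun v hv => (lt_min hp hq).trans_le hv.1
  have hcont : ContinuousOn (fun u => exp (-u) / √u) ((fun v => v ^ 2) '' Set.uIcc p q) := by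
    refine ContinuousOn.div (by fun_prop) (by fun_prop) ?_
    rintro _ ⟨v, hv, rfl⟩
    exact (sqrt_pos.2 (pow_pos (hpos v hv) 2)).ne'
  rw [← integral_comp_mul_deriv' (f' := fun v => 2 * v)
    (fun v _ => by simpa using hasDerivAt_pow 2 v) (by fun_prop) hcont]
  have hint : ∀ a b : ℝ, IntervalIntegrable (fun v => exp (-v ^ 2)) MeasureTheory.volume a b :=
    fun a b => (by fun_prop : Continuous fun v : ℝ => exp (-v ^ 2)).intervalIntegrable a b
  rw [integral_congr (g := fun v => 2 * exp (-v ^ 2)) fun v hv => ?_, integral_const_mul,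
    gaussPrimitive, gaussPrimitive, integral_interval_sub_left (hint 0 q) (hint 0 p)]
  have hv := hpos v hv
  simp only [Function.comp_apply, sqrt_sq hv.le]
  field_simp

theorem gaussPrimitive_mul_of_eq_one_or_eq_neg_one {ε : ℝ} (hε : ε = 1 ∨ ε = -1) (x : ℝ) :
    gaussPrimitive (ε * x) = ε * gaussPrimitive x := by
  rcases hε with rfl | rfl <;> simp [gaussPrimitive_neg]

theorem Phi1_eq_heatProfile {lam t w ε : ℝ} (hlam : 0 < lam) (ht : t < 1) (hw : 0 < w)
    (hε : ε = 1 ∨ ε = -1) (hεw : 0 < ε * (w - lam)) :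
    Phi1 lam t w =
      exp (lam ^ 2 / 2) / √2 * (heatProfile lam t w - ε * heatProfile (-lam) t w) / w := by
  have hs : 0 < √(2 * (1 - t)) := sqrt_pos.2 (by linarith)
  have hs2 : √(2 * (1 - t)) ^ 2 = 2 * (1 - t) := sq_sqrt (by linarith)
  have hb : (w + lam) ^ 2 / (2 * (1 - t)) = ((w + lam) / √(2 * (1 - t))) ^ 2 := by
    rw [div_pow, hs2]
  have ha : (w - lam) ^ 2 / (2 * (1 - t)) = (ε * ((w + -lam) / √(2 * (1 - t)))) ^ 2 := by
    rw [mul_pow, div_pow, hs2]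
    rcases hε with rfl | rfl <;> ring
  have ha_pos : 0 < ε * ((w + -lam) / √(2 * (1 - t))) := by
    rw [← mul_div_assoc, ← sub_eq_add_neg]
    positivity
  rw [Phi1, ha, hb, integral_exp_neg_div_sqrt_sq ha_pos (by positivity),
    gaussPrimitive_mul_of_eq_one_or_eq_neg_one hε, heatProfile, heatProfile]
  field_simp

/-- `Φ^{1,λ}` solves the backward equation of the three dimensional
Bessel process away from the line `y = λ`:
`(1/2)∂²_{yy}Φ¹ + (1/y)∂_yΦ¹ + ∂_tΦ¹ = 0` for `t ∈ (0,1)`, `y > 0`, `y ≠ λ`. -/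
theorem Phi1_pde (lam : ℝ) (hlam : 0 < lam) (t : ℝ) (ht : t ∈ Set.Ioo (0 : ℝ) 1)
    (y : ℝ) (hy : 0 < y) (hylam : y ≠ lam) :
    (1 / 2) * deriv (fun z => deriv (fun w => Phi1 lam t w) z) y +
      (1 / y) * deriv (fun w => Phi1 lam t w) y +
      deriv (fun s => Phi1 lam s y) t = 0 := by
  obtain ⟨ε, hε, hεy⟩ : ∃ ε : ℝ, (ε = 1 ∨ ε = -1) ∧ 0 < ε * (y - lam) := by
    rcases hylam.lt_or_gt with h | h
    · exact ⟨-1, Or.inr rfl, by linarith⟩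
    · exact ⟨1, Or.inl rfl, by linarith⟩
  have hu := ((solvesBackwardHeatAt_heatProfile lam ht.2 y).sub
    ((solvesBackwardHeatAt_heatProfile (-lam) ht.2 y).const_mul ε)).const_mul
      (exp (lam ^ 2 / 2) / √2)
  refine hu.besselGenerator_div_eq_zero (f := Phi1 lam) hy.ne' ?_ ?_
  · have hεw : ∀ᶠ w in 𝓝 y, 0 < ε * (w - lam) := continuousAt_const.eventually_lt
      (by fun_prop : Continuous fun w => ε * (w - lam)).continuousAt hεy
    filter_upwards [lt_mem_nhds hy, hεw] with w hw hεw
    exact Phi1_eq_heatProfile hlam ht.2 hw hε hεw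
  · filter_upwards [Iio_mem_nhds ht.2] with s hs
    exact Phi1_eq_heatProfile hlam hs hy hε hεy
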